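/- Let Ω ⊆ ℝ^N (N ≥ 3) be an open set, let b, c : Ω → ℝ be continuous with c ≥ 0, and suppose u ∈ C²(Ω) is a positive classical supersolution of −Δu + b(x)|∇u| = c(x)u on Ω. Suppose there exist γ ≥ 0 and a smooth function E : Ω → ℝ with E > 0 and −ΔE ≥ 0 on Ω such that b(x)² ≤ γ² |∇E(x)|²/E(x)² for all x ∈ Ω. Then for every test function φ ∈ C_c^∞(Ω) we have ∫_Ω (c − b²/4) φ² dx ≤ (1 + 2γ) ∫_Ω |∇φ|² dx. -/

import Mathlib

open MeasureTheory

/-- The Laplacian of a function on Euclidean space. -/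
noncomputable def lap {N : ℕ} (f : EuclideanSpace ℝ (Fin N) → ℝ)
    (x : EuclideanSpace ℝ (Fin N)) : ℝ :=
  ∑ i, fderiv ℝ (fun y => fderiv ℝ f y (EuclideanSpace.single i 1)) x (EuclideanSpace.single i 1)

/-!
For a positive function `F`, put `V = ∇F / F`, so that `-ΔF / F = -div V - |V|²`.
Integrating by parts against `φ² / F` gives the Picone-type identity
`∫ φ² (-ΔF / F) = ∫ 2 φ ∇φ·V - φ² |V|²`.

For the superharmonic `E` the left side is nonnegative, and Young's inequality
`2 φ ∇φ·V ≤ φ² |V|² / 2 + 2 |∇φ|²` yields the Hardy-type bound `∫ φ² |∇E / E|² ≤ 4 ∫ |∇φ|²`.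

For the supersolution `u` we have `c ≤ -Δu / u + b |V|`, hence pointwise
`(c - b²/4) φ² ≤ φ² (-Δu / u) - (2 φ ∇φ·V - φ² |V|²) + |∇φ|² + |b| |φ| |∇φ|`
(complete the square in `|φ| (|V| - b/2) - |∇φ|`). The first two terms integrate to zero, and
since `|b| ≤ γ |∇E / E|`, the drift term is at most `γ |∇φ|² + γ/4 φ² |∇E / E|²`, whose
integral is at most `2 γ ∫ |∇φ|²` by the Hardy-type bound.
-/

open Set Function InnerProductSpace

lemma IsCompact.integrable_of_continuousOn_of_eq_zero {X : Type*} [TopologicalSpace X]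
    [T2Space X] [MeasurableSpace X] [OpensMeasurableSpace X] {μ : Measure X}
    [IsFiniteMeasureOnCompacts μ] {f : X → ℝ} {K : Set X} (hK : IsCompact K)
    (hf : ContinuousOn f K) (hf0 : ∀ x ∉ K, f x = 0) : Integrable f μ :=
  (hf.integrableOn_compact hK).integrable_of_forall_notMem_eq_zero hf0

theorem ContDiffOn.contDiff_of_tsupport_subset {𝕜 E F : Type*} [NontriviallyNormedField 𝕜]
    [NormedAddCommGroup E] [NormedSpace 𝕜 E] [NormedAddCommGroup F] [NormedSpace 𝕜 F]
    {n : WithTop ℕ∞} {f : E → F} {Ω : Set E} (hf : ContDiffOn 𝕜 n f Ω) (hΩ : IsOpen Ω)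
    (hfΩ : tsupport f ⊆ Ω) : ContDiff 𝕜 n f := by
  refine contDiff_iff_contDiffAt.2 fun x => ?_
  by_cases hx : x ∈ Ω
  · exact hf.contDiffAt (hΩ.mem_nhds hx)
  · exact contDiffAt_const.congr_of_eventuallyEq
      (notMem_tsupport_iff_eventuallyEq.1 fun h => hx (hfΩ h))

section IntegrationByParts

variable {E : Type*} [NormedAddCommGroup E] [NormedSpace ℝ E]

lemma ContDiffOn.contDiffOn_fderiv_apply {F : Type*} [NormedAddCommGroup F] [NormedSpace ℝ F]
    {f : E → F} {Ω : Set E} (hf : ContDiffOn ℝ 2 f Ω) (hΩ : IsOpen Ω) (v : E) :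
    ContDiffOn ℝ 1 (fun y => fderiv ℝ f y v) Ω :=
  (hf.fderiv_of_isOpen hΩ (m := 1) (by norm_num)).clm_apply contDiffOn_const

theorem integral_mul_fderiv_eq_neg_fderiv_mul_of_contDiffOn [FiniteDimensional ℝ E]
    [MeasurableSpace E] [BorelSpace E] {μ : Measure E} [μ.IsAddHaarMeasure] {ψ g : E → ℝ}
    {Ω : Set E} (hΩ : IsOpen Ω) (hψ : ContDiff ℝ 1 ψ) (hψc : HasCompactSupport ψ)
    (hψΩ : tsupport ψ ⊆ Ω) (hg : ContDiffOn ℝ 1 g Ω) (v : E) :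
    ∫ x, ψ x * fderiv ℝ g x v ∂μ = -∫ x, fderiv ℝ ψ x v * g x ∂μ := by
  have hψ' : Continuous fun x => fderiv ℝ ψ x v :=
    (hψ.continuous_fderiv one_ne_zero).clm_apply continuous_const
  have hg' : ContinuousOn (fun x => fderiv ℝ g x v) Ω :=
    (hg.continuousOn_fderiv_of_isOpen hΩ le_rfl).clm_apply continuousOn_const
  have hgd : DifferentiableOn ℝ g Ω := hg.differentiableOn one_ne_zero
  refine integral_mul_fderiv_eq_neg_fderiv_mul_of_integrable ?_ ?_ ?_
    (fun x _ => hψ.differentiable one_ne_zero x)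
    (fun x hx => hgd.differentiableAt (hΩ.mem_nhds (hψΩ hx)))
    <;> refine hψc.isCompact.integrable_of_continuousOn_of_eq_zero ?_ fun x hx => ?_
  · exact hψ'.continuousOn.mul (hg.continuousOn.mono hψΩ)
  · simp [fderiv_of_notMem_tsupport ℝ hx]
  · exact hψ.continuous.continuousOn.mul (hg'.mono hψΩ)
  · simp [image_eq_zero_of_notMem_tsupport hx]
  · exact hψ.continuous.continuousOn.mul (hg.continuousOn.mono hψΩ)
  · simp [image_eq_zero_of_notMem_tsupport hx]

end IntegrationByParts

lemma mul_le_abs_mul_of_abs_le {p s a : ℝ} (hs : |s| ≤ a) : p * s ≤ |p| * a :=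
  (le_abs_self _).trans ((abs_mul p s).trans_le (mul_le_mul_of_nonneg_left hs (abs_nonneg p)))

lemma sq_mul_sq_le_of_abs_le_mul {p r s t : ℝ} (hs : |s| ≤ r * t) :
    p ^ 2 * t ^ 2 ≤ 4 * r ^ 2 - 2 * (2 * p * s - p ^ 2 * t ^ 2) := by
  nlinarith [mul_le_abs_mul_of_abs_le (p := p) hs, sq_nonneg (2 * r - |p| * t), sq_abs p]

lemma sq_mul_sub_le_of_abs_le_mul {p r s t B : ℝ} (hr : 0 ≤ r) (hs : |s| ≤ r * t) :
    p ^ 2 * (B * t - B ^ 2 / 4) ≤ r ^ 2 + |B| * |p| * r - (2 * p * s - p ^ 2 * t ^ 2) := by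
  have hps := mul_le_abs_mul_of_abs_le (p := p) hs
  rw [← sq_abs p]
  nlinarith [sq_nonneg (|p| * (t - B / 2) - r),
    mul_nonneg (mul_nonneg (abs_nonneg p) hr) (sub_nonneg.2 (le_abs_self B))]

lemma abs_mul_mul_le_of_sq_le {p r B T γ : ℝ} (hγ : 0 ≤ γ) (hr : 0 ≤ r)
    (hB : B ^ 2 ≤ γ ^ 2 * T ^ 2) : |B| * |p| * r ≤ γ * r ^ 2 + γ / 4 * (p ^ 2 * T ^ 2) := by
  have hBT : |B| ≤ γ * |T| := by
    rw [← abs_of_nonneg hγ, ← abs_mul]; exact sq_le_sq.1 (by rwa [mul_pow])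
  rw [← sq_abs p, ← sq_abs T]
  nlinarith [mul_le_mul_of_nonneg_right hBT (mul_nonneg (abs_nonneg p) hr),
    mul_nonneg hγ (sq_nonneg (r - |p| * |T| / 2))]

section InnerProductSpace

variable {F : Type*} [NormedAddCommGroup F] [InnerProductSpace ℝ F]

lemma abs_real_inner_div_le (v w : F) {a : ℝ} (ha : 0 < a) :
    |⟪v, w⟫_ℝ / a| ≤ ‖v‖ * (‖w‖ / a) := by
  rw [abs_div, abs_of_pos ha, ← mul_div_assoc]
  exact div_le_div_of_nonneg_right (abs_real_inner_le_norm v w) ha.le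

variable [CompleteSpace F]

theorem ContDiffOn.continuousOn_gradient {f : F → ℝ} {Ω : Set F}
    (hf : ContDiffOn ℝ 1 f Ω) (hΩ : IsOpen Ω) : ContinuousOn (gradient f) Ω :=
  (toDual ℝ F).symm.continuous.comp_continuousOn (hf.continuousOn_fderiv_of_isOpen hΩ le_rfl)

theorem ContDiff.continuous_gradient {f : F → ℝ} (hf : ContDiff ℝ 1 f) :
    Continuous (gradient f) :=
  (toDual ℝ F).symm.continuous.comp (hf.continuous_fderiv one_ne_zero)

lemma gradient_of_notMem_tsupport {f : F → ℝ} {x : F} (hx : x ∉ tsupport f) :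
    gradient f x = 0 := by
  simp [gradient, fderiv_of_notMem_tsupport ℝ hx]

lemma inner_gradient_sq_div_gradient {φ G : F → ℝ} {x : F} (hφ : DifferentiableAt ℝ φ x)
    (hG : DifferentiableAt ℝ G x) (hG0 : G x ≠ 0) :
    ⟪gradient (fun y => φ y ^ 2 / G y) x, gradient G x⟫_ℝ =
      2 * φ x * (⟪gradient φ x, gradient G x⟫_ℝ / G x) -
        φ x ^ 2 * (‖gradient G x‖ / G x) ^ 2 := by
  have hderiv : HasFDerivAt (fun y => φ y ^ 2 * (G y)⁻¹)
      (φ x ^ 2 • (-(G x ^ 2)⁻¹) • fderiv ℝ G x + (G x)⁻¹ • (2 • φ x ^ (2 - 1)) • fderiv ℝ φ x)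
      x :=
    (hφ.hasFDerivAt.pow 2).fun_mul ((hasDerivAt_inv hG0).comp_hasFDerivAt x hG.hasFDerivAt)
  simp only [div_eq_mul_inv, inner_gradient_left, hderiv.fderiv]
  simp only [add_apply, smul_apply, smul_eq_mul, nsmul_eq_mul, ← inner_gradient_left,
    real_inner_self_eq_norm_sq]
  field_simp
  ring

lemma HasCompactSupport.integrable_of_continuousOn_of_eq_zero [MeasurableSpace F]
    [BorelSpace F] {μ : Measure F} [IsFiniteMeasureOnCompacts μ] {φ f : F → ℝ} {Ω : Set F}
    (hφc : HasCompactSupport φ) (hφΩ : tsupport φ ⊆ Ω) (hf : ContinuousOn f Ω)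
    (hf0 : ∀ x, φ x = 0 → gradient φ x = 0 → f x = 0) : Integrable f μ :=
  hφc.isCompact.integrable_of_continuousOn_of_eq_zero (hf.mono hφΩ) fun x hx =>
    hf0 x (image_eq_zero_of_notMem_tsupport hx) (gradient_of_notMem_tsupport hx)

end InnerProductSpace

section Euclidean

variable {N : ℕ}

lemma inner_gradient_eq_sum (f g : EuclideanSpace ℝ (Fin N) → ℝ)
    (x : EuclideanSpace ℝ (Fin N)) :
    ⟪gradient f x, gradient g x⟫_ℝ =
      ∑ i, fderiv ℝ f x (EuclideanSpace.single i 1) * fderiv ℝ g x (EuclideanSpace.single i 1) := by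
  have hcoord (h : EuclideanSpace ℝ (Fin N) → ℝ) (i : Fin N) :
      gradient h x i = fderiv ℝ h x (EuclideanSpace.single i 1) := by
    rw [← inner_gradient_left, EuclideanSpace.inner_single_right]; simp
  simp only [PiLp.inner_apply, hcoord, RCLike.inner_apply, conj_trivial, mul_comm]

lemma ContDiffOn.continuousOn_lap {f : EuclideanSpace ℝ (Fin N) → ℝ}
    {Ω : Set (EuclideanSpace ℝ (Fin N))} (hf : ContDiffOn ℝ 2 f Ω) (hΩ : IsOpen Ω) :
    ContinuousOn (lap f) Ω :=
  continuousOn_finsetSum _ fun _ _ =>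
    ((hf.contDiffOn_fderiv_apply hΩ _).continuousOn_fderiv_of_isOpen hΩ le_rfl).clm_apply
      continuousOn_const

theorem integral_mul_lap_eq_neg_integral_inner_gradient {f ψ : EuclideanSpace ℝ (Fin N) → ℝ}
    {Ω : Set (EuclideanSpace ℝ (Fin N))} (hΩ : IsOpen Ω) (hf : ContDiffOn ℝ 2 f Ω)
    (hψ : ContDiff ℝ 1 ψ) (hψc : HasCompactSupport ψ) (hψΩ : tsupport ψ ⊆ Ω) :
    ∫ x, ψ x * lap f x = -∫ x, ⟪gradient ψ x, gradient f x⟫_ℝ := by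
  have hDf (i : Fin N) := hf.contDiffOn_fderiv_apply hΩ (EuclideanSpace.single i 1)
  simp only [lap, Finset.mul_sum, inner_gradient_eq_sum]
  rw [integral_finsetSum _ fun i _ => ?_, integral_finsetSum _ fun _ _ => ?_,
    ← Finset.sum_neg_distrib]
  · exact Finset.sum_congr rfl fun i _ =>
      integral_mul_fderiv_eq_neg_fderiv_mul_of_contDiffOn hΩ hψ hψc hψΩ (hDf i) _
  all_goals refine hψc.isCompact.integrable_of_continuousOn_of_eq_zero ?_ fun x hx => ?_
  · exact ((hψ.continuous_fderiv one_ne_zero).clm_apply continuous_const).continuousOn.mul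
      (((hf.of_le one_le_two).continuousOn_fderiv_of_isOpen hΩ le_rfl).clm_apply
        continuousOn_const |>.mono hψΩ)
  · simp [fderiv_of_notMem_tsupport ℝ hx]
  · exact hψ.continuous.continuousOn.mul
      (((hDf i).continuousOn_fderiv_of_isOpen hΩ le_rfl).clm_apply continuousOn_const |>.mono hψΩ)
  · simp [image_eq_zero_of_notMem_tsupport hx]

theorem integral_sq_mul_neg_lap_div_eq {F φ : EuclideanSpace ℝ (Fin N) → ℝ}
    {Ω : Set (EuclideanSpace ℝ (Fin N))} (hΩ : IsOpen Ω) (hF : ContDiffOn ℝ 2 F Ω)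
    (hFpos : ∀ x ∈ Ω, 0 < F x) (hφ : ContDiff ℝ 1 φ) (hφc : HasCompactSupport φ)
    (hφΩ : tsupport φ ⊆ Ω) :
    ∫ x, φ x ^ 2 * (-lap F x / F x) =
      ∫ x, (2 * φ x * (⟪gradient φ x, gradient F x⟫_ℝ / F x) -
        φ x ^ 2 * (‖gradient F x‖ / F x) ^ 2) := by
  set ψ := fun y => φ y ^ 2 / F y
  have hψφ : support ψ ⊆ tsupport φ := fun y hy => subset_tsupport φ fun h => hy (by simp [ψ, h])
  have hψΩ : tsupport ψ ⊆ Ω := (closure_minimal hψφ (isClosed_tsupport φ)).trans hφΩ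
  have hψ : ContDiff ℝ 1 ψ := ContDiffOn.contDiff_of_tsupport_subset
    ((hφ.contDiffOn.pow 2).div (hF.of_le one_le_two) fun x hx => (hFpos x hx).ne') hΩ hψΩ
  calc ∫ x, φ x ^ 2 * (-lap F x / F x) = -∫ x, ψ x * lap F x := by
        rw [← integral_neg]; congr 1 with x; ring
    _ = ∫ x, ⟪gradient ψ x, gradient F x⟫_ℝ := by
        rw [integral_mul_lap_eq_neg_integral_inner_gradient hΩ hF hψ (hφc.mono' hψφ) hψΩ,
          neg_neg]
    _ = _ := by
        congr 1 with x
        by_cases hx : x ∈ Ω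
        · have hFd := (hF.differentiableOn two_ne_zero).differentiableAt (hΩ.mem_nhds hx)
          exact inner_gradient_sq_div_gradient (hφ.differentiable one_ne_zero x) hFd
            (hFpos x hx).ne'
        · simp [gradient_of_notMem_tsupport (fun h => hx (hψΩ h)),
            image_eq_zero_of_notMem_tsupport (fun h => hx (hφΩ h))]

theorem integral_sq_mul_sq_norm_gradient_div_le {E φ : EuclideanSpace ℝ (Fin N) → ℝ}
    {Ω : Set (EuclideanSpace ℝ (Fin N))} (hΩ : IsOpen Ω) (hE : ContDiffOn ℝ 2 E Ω)
    (hEpos : ∀ x ∈ Ω, 0 < E x) (hEsuper : ∀ x ∈ Ω, 0 ≤ -lap E x) (hφ : ContDiff ℝ 1 φ)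
    (hφc : HasCompactSupport φ) (hφΩ : tsupport φ ⊆ Ω) :
    ∫ x, φ x ^ 2 * (‖gradient E x‖ / E x) ^ 2 ≤ 4 * ∫ x, ‖gradient φ x‖ ^ 2 := by
  have : Continuous φ := hφ.continuous
  have : Continuous (gradient φ) := hφ.continuous_gradient
  have : ContinuousOn E Ω := hE.continuousOn
  have : ContinuousOn (gradient E) Ω := (hE.of_le one_le_two).continuousOn_gradient hΩ
  have : ∀ x ∈ Ω, E x ≠ 0 := fun x hx => (hEpos x hx).ne'
  have hA : Integrable fun x => φ x ^ 2 * (‖gradient E x‖ / E x) ^ 2 :=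
    hφc.integrable_of_continuousOn_of_eq_zero hφΩ (by fun_prop (disch := assumption))
      fun x h _ => by simp [h]
  have hG : Integrable fun x => ‖gradient φ x‖ ^ 2 :=
    hφc.integrable_of_continuousOn_of_eq_zero hφΩ (by fun_prop) fun x _ h => by simp [h]
  have hB : Integrable fun x => 2 * φ x * (⟪gradient φ x, gradient E x⟫_ℝ / E x) -
      φ x ^ 2 * (‖gradient E x‖ / E x) ^ 2 :=
    hφc.integrable_of_continuousOn_of_eq_zero hφΩ (by fun_prop (disch := assumption))
      fun x h _ => by simp [h]
  have hout (x) (hx : x ∉ Ω) : φ x = 0 := image_eq_zero_of_notMem_tsupport fun h => hx (hφΩ h)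
  have hnonneg : 0 ≤ ∫ x, φ x ^ 2 * (-lap E x / E x) := integral_nonneg fun x => by
    by_cases hx : x ∈ Ω
    · exact mul_nonneg (sq_nonneg _) (div_nonneg (hEsuper x hx) (hEpos x hx).le)
    · simp [hout x hx]
  calc ∫ x, φ x ^ 2 * (‖gradient E x‖ / E x) ^ 2
      ≤ ∫ x, (4 * ‖gradient φ x‖ ^ 2 - 2 * (2 * φ x * (⟪gradient φ x, gradient E x⟫_ℝ / E x) -
          φ x ^ 2 * (‖gradient E x‖ / E x) ^ 2)) := by
        refine integral_mono hA ((hG.const_mul 4).sub (hB.const_mul 2)) fun x => ?_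
        by_cases hx : x ∈ Ω
        · exact sq_mul_sq_le_of_abs_le_mul (abs_real_inner_div_le _ _ (hEpos x hx))
        · simp [hout x hx]
    _ ≤ 4 * ∫ x, ‖gradient φ x‖ ^ 2 := by
        rw [integral_sub (hG.const_mul 4) (hB.const_mul 2), integral_const_mul,
          integral_const_mul, ← integral_sq_mul_neg_lap_div_eq hΩ hE hEpos hφ hφc hφΩ]
        linarith

theorem integral_sub_sq_div_four_mul_sq_le {b c u φ : EuclideanSpace ℝ (Fin N) → ℝ}
    {Ω : Set (EuclideanSpace ℝ (Fin N))} (hΩ : IsOpen Ω) (hb : ContinuousOn b Ω)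
    (hc : ContinuousOn c Ω) (hu : ContDiffOn ℝ 2 u Ω) (hupos : ∀ x ∈ Ω, 0 < u x)
    (hsuper : ∀ x ∈ Ω, c x * u x ≤ -lap u x + b x * ‖gradient u x‖) (hφ : ContDiff ℝ 1 φ)
    (hφc : HasCompactSupport φ) (hφΩ : tsupport φ ⊆ Ω) :
    ∫ x, (c x - b x ^ 2 / 4) * φ x ^ 2 ≤
      (∫ x, ‖gradient φ x‖ ^ 2) + ∫ x, |b x| * |φ x| * ‖gradient φ x‖ := by
  have : Continuous φ := hφ.continuous
  have : Continuous (gradient φ) := hφ.continuous_gradient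
  have : ContinuousOn u Ω := hu.continuousOn
  have : ContinuousOn (gradient u) Ω := (hu.of_le one_le_two).continuousOn_gradient hΩ
  have : ContinuousOn (lap u) Ω := hu.continuousOn_lap hΩ
  have : ∀ x ∈ Ω, u x ≠ 0 := fun x hx => (hupos x hx).ne'
  have hL : Integrable fun x => (c x - b x ^ 2 / 4) * φ x ^ 2 :=
    hφc.integrable_of_continuousOn_of_eq_zero hφΩ (by fun_prop) fun x h _ => by simp [h]
  have hU : Integrable fun x => φ x ^ 2 * (-lap u x / u x) :=
    hφc.integrable_of_continuousOn_of_eq_zero hφΩ (by fun_prop (disch := assumption))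
      fun x h _ => by simp [h]
  have hB : Integrable fun x => 2 * φ x * (⟪gradient φ x, gradient u x⟫_ℝ / u x) -
      φ x ^ 2 * (‖gradient u x‖ / u x) ^ 2 :=
    hφc.integrable_of_continuousOn_of_eq_zero hφΩ (by fun_prop (disch := assumption))
      fun x h _ => by simp [h]
  have hG : Integrable fun x => ‖gradient φ x‖ ^ 2 :=
    hφc.integrable_of_continuousOn_of_eq_zero hφΩ (by fun_prop) fun x _ h => by simp [h]
  have hD : Integrable fun x => |b x| * |φ x| * ‖gradient φ x‖ :=
    hφc.integrable_of_continuousOn_of_eq_zero hφΩ (by fun_prop) fun x h _ => by simp [h]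
  calc ∫ x, (c x - b x ^ 2 / 4) * φ x ^ 2
      ≤ ∫ x, (φ x ^ 2 * (-lap u x / u x) - (2 * φ x * (⟪gradient φ x, gradient u x⟫_ℝ / u x) -
          φ x ^ 2 * (‖gradient u x‖ / u x) ^ 2) + ‖gradient φ x‖ ^ 2 +
          |b x| * |φ x| * ‖gradient φ x‖) := by
        refine integral_mono hL (((hU.sub hB).add hG).add hD) fun x => ?_
        by_cases hx : x ∈ Ω
        · have hcx : c x ≤ -lap u x / u x + b x * (‖gradient u x‖ / u x) := by
            rw [← mul_div_assoc, ← add_div, le_div_iff₀ (hupos x hx)]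
            exact hsuper x hx
          have := sq_mul_sub_le_of_abs_le_mul (p := φ x) (B := b x) (norm_nonneg _)
            (abs_real_inner_div_le (gradient φ x) (gradient u x) (hupos x hx))
          nlinarith [mul_le_mul_of_nonneg_left hcx (sq_nonneg (φ x))]
        · simp [image_eq_zero_of_notMem_tsupport fun h => hx (hφΩ h),
            gradient_of_notMem_tsupport fun h => hx (hφΩ h)]
    _ = (∫ x, ‖gradient φ x‖ ^ 2) + ∫ x, |b x| * |φ x| * ‖gradient φ x‖ := by
        rw [integral_add, integral_add, integral_sub hU hB,
          integral_sq_mul_neg_lap_div_eq hΩ hu hupos hφ hφc hφΩ, sub_self, zero_add]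
        exacts [hU.sub hB, hG, (hU.sub hB).add hG, hD]

theorem integral_abs_mul_abs_mul_norm_gradient_le {b E φ : EuclideanSpace ℝ (Fin N) → ℝ}
    {Ω : Set (EuclideanSpace ℝ (Fin N))} {γ : ℝ} (hΩ : IsOpen Ω) (hb : ContinuousOn b Ω)
    (hγ : 0 ≤ γ) (hE : ContDiffOn ℝ 2 E Ω) (hEpos : ∀ x ∈ Ω, 0 < E x)
    (hEsuper : ∀ x ∈ Ω, 0 ≤ -lap E x)
    (hbE : ∀ x ∈ Ω, b x ^ 2 ≤ γ ^ 2 * ‖gradient E x‖ ^ 2 / E x ^ 2) (hφ : ContDiff ℝ 1 φ)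
    (hφc : HasCompactSupport φ) (hφΩ : tsupport φ ⊆ Ω) :
    ∫ x, |b x| * |φ x| * ‖gradient φ x‖ ≤ 2 * γ * ∫ x, ‖gradient φ x‖ ^ 2 := by
  have : Continuous φ := hφ.continuous
  have : Continuous (gradient φ) := hφ.continuous_gradient
  have : ContinuousOn E Ω := hE.continuousOn
  have : ContinuousOn (gradient E) Ω := (hE.of_le one_le_two).continuousOn_gradient hΩ
  have : ∀ x ∈ Ω, E x ≠ 0 := fun x hx => (hEpos x hx).ne'
  have hD : Integrable fun x => |b x| * |φ x| * ‖gradient φ x‖ :=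
    hφc.integrable_of_continuousOn_of_eq_zero hφΩ (by fun_prop) fun x h _ => by simp [h]
  have hG : Integrable fun x => ‖gradient φ x‖ ^ 2 :=
    hφc.integrable_of_continuousOn_of_eq_zero hφΩ (by fun_prop) fun x _ h => by simp [h]
  have hA : Integrable fun x => φ x ^ 2 * (‖gradient E x‖ / E x) ^ 2 :=
    hφc.integrable_of_continuousOn_of_eq_zero hφΩ (by fun_prop (disch := assumption))
      fun x h _ => by simp [h]
  have hhardy := integral_sq_mul_sq_norm_gradient_div_le hΩ hE hEpos hEsuper hφ hφc hφΩ
  calc ∫ x, |b x| * |φ x| * ‖gradient φ x‖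
      ≤ ∫ x, (γ * ‖gradient φ x‖ ^ 2 + γ / 4 * (φ x ^ 2 * (‖gradient E x‖ / E x) ^ 2)) := by
        refine integral_mono hD ((hG.const_mul _).add (hA.const_mul _)) fun x => ?_
        by_cases hx : x ∈ Ω
        · refine abs_mul_mul_le_of_sq_le hγ (norm_nonneg _) ?_
          rw [div_pow, mul_div_assoc']
          exact hbE x hx
        · simp [image_eq_zero_of_notMem_tsupport fun h => hx (hφΩ h),
            gradient_of_notMem_tsupport fun h => hx (hφΩ h)]
    _ ≤ 2 * γ * ∫ x, ‖gradient φ x‖ ^ 2 := by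
        rw [integral_add (hG.const_mul _) (hA.const_mul _), integral_const_mul,
          integral_const_mul]
        nlinarith [mul_le_mul_of_nonneg_left hhardy hγ]

end Euclidean
theorem stmt_17_general {N : ℕ} (Ω : Set (EuclideanSpace ℝ (Fin N))) (hΩ : IsOpen Ω)
    (b c : EuclideanSpace ℝ (Fin N) → ℝ)
    (hb : ContinuousOn b Ω) (hc : ContinuousOn c Ω)
    (u : EuclideanSpace ℝ (Fin N) → ℝ) (hu : ContDiffOn ℝ 2 u Ω)
    (hupos : ∀ x ∈ Ω, 0 < u x)
    (hsuper : ∀ x ∈ Ω, c x * u x ≤ -(lap u x) + b x * ‖gradient u x‖)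
    (γ : ℝ) (hγ : 0 ≤ γ)
    (E : EuclideanSpace ℝ (Fin N) → ℝ) (hE : ContDiffOn ℝ (⊤ : ℕ∞) E Ω)
    (hEpos : ∀ x ∈ Ω, 0 < E x) (hEsuper : ∀ x ∈ Ω, 0 ≤ -(lap E x))
    (hbE : ∀ x ∈ Ω, (b x) ^ 2 ≤ γ ^ 2 * ‖gradient E x‖ ^ 2 / (E x) ^ 2)
    (φ : EuclideanSpace ℝ (Fin N) → ℝ)
    (hφ : ContDiff ℝ (⊤ : ℕ∞) φ) (hφc : HasCompactSupport φ) (hφΩ : tsupport φ ⊆ Ω) :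
    (∫ x in Ω, (c x - (b x) ^ 2 / 4) * (φ x) ^ 2) ≤
      (1 + 2 * γ) * ∫ x in Ω, ‖gradient φ x‖ ^ 2 := by
  have hφ1 : ContDiff ℝ 1 φ := hφ.of_le (WithTop.coe_le_coe.2 le_top)
  have hE2 : ContDiffOn ℝ 2 E Ω := hE.of_le (WithTop.coe_le_coe.2 le_top)
  have hout (x) (hx : x ∉ Ω) : x ∉ tsupport φ := fun h => hx (hφΩ h)
  rw [setIntegral_eq_integral_of_forall_compl_eq_zero fun x hx => by
      simp [image_eq_zero_of_notMem_tsupport (hout x hx)],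
    setIntegral_eq_integral_of_forall_compl_eq_zero fun x hx => by
      simp [gradient_of_notMem_tsupport (hout x hx)]]
  have hestimate := integral_sub_sq_div_four_mul_sq_le hΩ hb hc hu hupos hsuper hφ1 hφc hφΩ
  have hdrift := integral_abs_mul_abs_mul_norm_gradient_le hΩ hb hγ hE2 hEpos hEsuper hbE hφ1
    hφc hφΩ
  linarith

theorem stmt_17 {N : ℕ} (hN : 3 ≤ N) (Ω : Set (EuclideanSpace ℝ (Fin N))) (hΩ : IsOpen Ω)
    (b c : EuclideanSpace ℝ (Fin N) → ℝ)
    (hb : ContinuousOn b Ω) (hc : ContinuousOn c Ω) (hc0 : ∀ x ∈ Ω, 0 ≤ c x)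
    (u : EuclideanSpace ℝ (Fin N) → ℝ) (hu : ContDiffOn ℝ 2 u Ω)
    (hupos : ∀ x ∈ Ω, 0 < u x)
    (hsuper : ∀ x ∈ Ω, c x * u x ≤ -(lap u x) + b x * ‖gradient u x‖)
    (γ : ℝ) (hγ : 0 ≤ γ)
    (E : EuclideanSpace ℝ (Fin N) → ℝ) (hE : ContDiffOn ℝ (⊤ : ℕ∞) E Ω)
    (hEpos : ∀ x ∈ Ω, 0 < E x) (hEsuper : ∀ x ∈ Ω, 0 ≤ -(lap E x))
    (hbE : ∀ x ∈ Ω, (b x) ^ 2 ≤ γ ^ 2 * ‖gradient E x‖ ^ 2 / (E x) ^ 2)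
    (φ : EuclideanSpace ℝ (Fin N) → ℝ)
    (hφ : ContDiff ℝ (⊤ : ℕ∞) φ) (hφc : HasCompactSupport φ) (hφΩ : tsupport φ ⊆ Ω) :
    (∫ x in Ω, (c x - (b x) ^ 2 / 4) * (φ x) ^ 2) ≤
      (1 + 2 * γ) * ∫ x in Ω, ‖gradient φ x‖ ^ 2 :=
  stmt_17_general Ω hΩ b c hb hc u hu hupos hsuper γ hγ E hE hEpos hEsuper hbE φ hφ hφc hφΩ
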